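/- For the adele ring of ℚ, every adele can be written as the sum of a rational number, an element of ∏_p ℤ_p × {0}, and an element supported only at the Archimedean place; equivalently A_ℚ = ℚ + (Ẑ × ℝ). -/

import Mathlib

/-!
Let `a` be a finite adele and `S` the finite set of primes at which it is not integral. For
`p ∈ S`, density of `ℚ` in `ℚ_p` and a partial-fraction decomposition of the approximant give a
rational `r_p` with `a_p - r_p ∈ ℤ_p` whose denominator is a power of `p`, so that `r_p` is
integral at every other prime. Then `a - ∑_{p ∈ S} r_p` is integral everywhere, and the real
component is absorbed by the Archimedean summand.
-/

open IsDedekindDomain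

/-- The adele ring of `ℚ`: the product of the Archimedean completion `ℝ` with the
finite adele ring (the restricted product of the `ℚ_p` with respect to the `ℤ_p`). -/
abbrev RatAdeleRing : Type := ℝ × FiniteAdeleRing ℤ ℚ

namespace IsDedekindDomain.HeightOneSpectrum

open Submodule.IsPrincipal

variable {R : Type*} [CommRing R] [IsDedekindDomain R] {K : Type*} [Field K] [Algebra R K]
  [IsFractionRing R K]

theorem valuation_div_le_one_of_notMem (w : HeightOneSpectrum R) (a : R) {b : R}
    (hb : b ∉ w.asIdeal) : w.valuation K (algebraMap R K a / algebraMap R K b) ≤ 1 := by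
  rw [map_div₀, valuation_of_algebraMap, valuation_of_algebraMap,
    (w.intValuation_eq_one_iff_mem_primeCompl b).mpr hb, div_one]
  exact w.intValuation_le_one a

theorem algebraMap_mem_adicCompletionIntegers {v : HeightOneSpectrum R} {q : K}
    (hq : v.valuation K q ≤ 1) : algebraMap K (v.adicCompletion K) q ∈ v.adicCompletionIntegers K :=
  (valuedAdicCompletion_eq_valuation' v q).trans_le hq

theorem exists_sub_mem_adicCompletionIntegers (v : HeightOneSpectrum R)
    (x : v.adicCompletion K) :
    ∃ q : K, x - algebraMap K (v.adicCompletion K) q ∈ v.adicCompletionIntegers K := by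
  have hopen : IsOpen ((x - ·) ⁻¹' (v.adicCompletionIntegers K : Set (v.adicCompletion K))) :=
    (Valued.isOpen_valuationSubring _).preimage (continuous_const.sub continuous_id)
  exact (denseRange_algebraMap K v).exists_mem_open hopen ⟨x, by simp⟩

theorem eq_of_generator_mem [IsPrincipalIdealRing R] {v w : HeightOneSpectrum R}
    (h : generator v.asIdeal ∈ w.asIdeal) : v = w := by
  have hle : v.asIdeal ≤ w.asIdeal := by
    rwa [← span_singleton_generator v.asIdeal, Ideal.span_singleton_le_iff_mem]
  exact HeightOneSpectrum.ext (v.isMaximal.eq_of_le w.isPrime.ne_top hle)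

theorem exists_valuation_sub_le_one_and_valuation_le_one_of_ne [IsPrincipalIdealRing R]
    (v : HeightOneSpectrum R) (q : K) :
    ∃ r : K, v.valuation K (q - r) ≤ 1 ∧ ∀ w ≠ v, w.valuation K r ≤ 1 := by
  set π := generator v.asIdeal
  have hπ : Prime π := prime_generator_of_isPrime _ v.ne_bot
  obtain ⟨n, d, hd, rfl⟩ := IsFractionRing.div_surjective R q
  obtain ⟨k, m, hπm, rfl⟩ :=
    WfDvdMonoid.max_power_factor (nonZeroDivisors.ne_zero hd) hπ.irreducible
  obtain ⟨u, t, hut⟩ := (hπ.coprime_iff_not_dvd.mpr hπm).pow_left (m := k)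
  -- Partial fractions: `n / (π ^ k * m) = n * u / m + n * t / π ^ k`.
  refine ⟨algebraMap R K (n * t) / algebraMap R K (π ^ k), ?_, fun w hw ↦ ?_⟩
  · have hπk : algebraMap R K (π ^ k) ≠ 0 :=
      IsFractionRing.to_map_ne_zero_of_mem_nonZeroDivisors (mul_mem_nonZeroDivisors.mp hd).1
    have hm : algebraMap R K m ≠ 0 :=
      IsFractionRing.to_map_ne_zero_of_mem_nonZeroDivisors (mul_mem_nonZeroDivisors.mp hd).2
    have hsub : algebraMap R K n / algebraMap R K (π ^ k * m) -
        algebraMap R K (n * t) / algebraMap R K (π ^ k) =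
        algebraMap R K (n * u) / algebraMap R K m := by
      have hut' := congrArg (algebraMap R K) hut
      simp only [map_add, map_mul, map_one] at hut' ⊢
      rw [div_sub_div _ _ (mul_ne_zero hπk hm) hπk, div_eq_div_iff (by positivity) hm]
      linear_combination -(algebraMap R K n * algebraMap R K (π ^ k) * algebraMap R K m) * hut'
    rw [hsub]
    exact v.valuation_div_le_one_of_notMem _ (by rwa [mem_iff_generator_dvd])
  · exact w.valuation_div_le_one_of_notMem _
      fun h ↦ hw (eq_of_generator_mem (w.isPrime.mem_of_pow_mem k h)).symm

theorem exists_sub_mem_adicCompletionIntegers_and_valuation_le_one_of_ne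
    [IsPrincipalIdealRing R] (v : HeightOneSpectrum R) (x : v.adicCompletion K) :
    ∃ r : K, x - algebraMap K (v.adicCompletion K) r ∈ v.adicCompletionIntegers K ∧
      ∀ w ≠ v, w.valuation K r ≤ 1 := by
  obtain ⟨q, hq⟩ := v.exists_sub_mem_adicCompletionIntegers x
  obtain ⟨r, hqr, hr⟩ := v.exists_valuation_sub_le_one_and_valuation_le_one_of_ne q
  refine ⟨r, ?_, hr⟩
  have : x - algebraMap K _ r = (x - algebraMap K _ q) + algebraMap K _ (q - r) := by
    rw [map_sub]
    abel
  rw [this]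
  exact add_mem hq (algebraMap_mem_adicCompletionIntegers hqr)

end IsDedekindDomain.HeightOneSpectrum

namespace IsDedekindDomain.FiniteAdeleRing

open HeightOneSpectrum

variable {R : Type*} [CommRing R] [IsDedekindDomain R] {K : Type*} [Field K] [Algebra R K]
  [IsFractionRing R K]

theorem sub_algebraMap_apply (a : FiniteAdeleRing R K) (q : K) (v : HeightOneSpectrum R) :
    (a - algebraMap K (FiniteAdeleRing R K) q) v = a v - algebraMap K (v.adicCompletion K) q :=
  rfl

variable [IsPrincipalIdealRing R]

theorem exists_sub_mem_adicCompletionIntegers_of_finset (s : Finset (HeightOneSpectrum R))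
    (a : FiniteAdeleRing R K) (ha : ∀ v ∉ s, a v ∈ v.adicCompletionIntegers K) :
    ∃ q : K, ∀ v, (a - algebraMap K (FiniteAdeleRing R K) q) v ∈ v.adicCompletionIntegers K := by
  classical
  induction s using Finset.induction_on generalizing a with
  | empty => exact ⟨0, fun v ↦ by simpa using ha v (Finset.notMem_empty v)⟩
  | @insert v₀ s _ ih =>
    obtain ⟨r, hr₀, hr⟩ :=
      v₀.exists_sub_mem_adicCompletionIntegers_and_valuation_le_one_of_ne (a v₀)
    obtain ⟨q, hq⟩ := ih (a - algebraMap K _ r) fun v hv ↦ by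
      rw [sub_algebraMap_apply]
      by_cases hvv₀ : v = v₀
      · exact hvv₀ ▸ hr₀
      · exact sub_mem (ha v (by simp [hvv₀, hv]))
          (algebraMap_mem_adicCompletionIntegers (hr v hvv₀))
    exact ⟨r + q, by simpa [sub_sub] using hq⟩

theorem exists_sub_mem_adicCompletionIntegers (a : FiniteAdeleRing R K) :
    ∃ q : K, ∀ v, (a - algebraMap K (FiniteAdeleRing R K) q) v ∈ v.adicCompletionIntegers K := by
  have hfin := Filter.eventually_cofinite.mp a.2
  exact exists_sub_mem_adicCompletionIntegers_of_finset hfin.toFinset a fun v hv ↦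
    not_not.mp fun h ↦ hv (hfin.mem_toFinset.mpr h)

end IsDedekindDomain.FiniteAdeleRing

/-- Strong approximation decomposition for `ℚ`: every adele is the sum of a (diagonally
embedded) rational number, an element of `∏_p ℤ_p × {0}` (an adele with zero Archimedean
component which is integral at every prime), and an element supported only at the
Archimedean place; i.e. `A_ℚ = ℚ + (Ẑ × ℝ)`. -/
theorem ratAdeleRing_eq_rat_add_zhat_prod_real (a : RatAdeleRing) :
    ∃ (q : ℚ) (r : ℝ) (z : FiniteAdeleRing ℤ ℚ),
      (∀ v : HeightOneSpectrum ℤ, z v ∈ v.adicCompletionIntegers ℚ) ∧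
      a = algebraMap ℚ RatAdeleRing q + (r, z) := by
  obtain ⟨q, hq⟩ := FiniteAdeleRing.exists_sub_mem_adicCompletionIntegers a.2
  exact ⟨q, a.1 - algebraMap ℚ ℝ q, a.2 - algebraMap ℚ _ q, hq, by ext <;> simp⟩
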